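/- Let P : L → ℝ[z, a, a⁻¹] satisfy the HOMFLY-PT skein relation a·P(L₊) − a⁻¹·P(L₋) = z·P(L₀). Define 𝒫_k(L) := z^k · (∂^k/∂a^k P(L))|_{a=1}. Then for every k ≥ 0: 𝒫_k(L₊) − 𝒫_k(L₋) + k·z·𝒫_{k−1}(L₊) + ∑_{i=0}^{k−1} (−1)^{k−1−i} (k!/i!) z^{k−i} 𝒫_i(L₋) = z·𝒫_k(L₀). -/

import Mathlib

open Filter Topology

def Sm (f : ℝ → ℝ) (x : ℝ) : Prop := ∀ m : ℕ, ∀ᶠ y in 𝓝 x, ContDiffAt ℝ m f y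

lemma Sm.of_cd {f : ℝ → ℝ} {x : ℝ} (h : ContDiffAt ℝ (⊤ : ℕ∞) f x) : Sm f x :=
  fun m => (h.of_le (by exact_mod_cast (le_top : (m : ℕ∞) ≤ ⊤))).eventually (by simp)

lemma Sm.deriv {f : ℝ → ℝ} {x : ℝ} (h : Sm f x) : Sm (deriv f) x :=
  fun m => (h (m + 1)).mono fun y hy => hy.derivWithin (by exact_mod_cast le_rfl)

lemma Sm.evd {f : ℝ → ℝ} {x : ℝ} (h : Sm f x) : ∀ᶠ y in 𝓝 x, DifferentiableAt ℝ f y :=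
  (h 1).mono fun y hy => hy.differentiableAt (by simp)

lemma Sm.differentiableAt {f : ℝ → ℝ} {x : ℝ} (h : Sm f x) : DifferentiableAt ℝ f x :=
  h.evd.self_of_nhds

lemma Sm.id_mul {f : ℝ → ℝ} {x : ℝ} (h : Sm f x) : Sm (fun a => a * f a) x :=
  fun m => (h m).mono fun y hy => contDiffAt_id.mul hy

lemma Sm.const_mul {f : ℝ → ℝ} {x : ℝ} (c : ℝ) (h : Sm f x) : Sm (fun a => c * f a) x :=
  fun m => (h m).mono fun y hy => contDiffAt_const.mul hy

private lemma an_deriv {f : ℝ → ℝ} {x : ℝ} (h : Sm f x) :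
    Sm (deriv f) x :=
  h.deriv

private lemma iter_add : ∀ (n : ℕ) {f g : ℝ → ℝ} {x : ℝ}, Sm f x → Sm g x →
    iteratedDeriv n (fun a => f a + g a) x = iteratedDeriv n f x + iteratedDeriv n g x := by
  intro n
  induction n with
  | zero => intro f g x hf hg; simp
  | succ n ih =>
    intro f g x hf hg
    have hev : deriv (fun a => f a + g a) =ᶠ[𝓝 x] fun a => deriv f a + deriv g a := by
      filter_upwards [hf.evd, hg.evd] with a ha hb
      exact deriv_add ha hb
    rw [iteratedDeriv_succ', hev.iteratedDeriv_eq n, ih (an_deriv hf) (an_deriv hg),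
      iteratedDeriv_succ', iteratedDeriv_succ']

private lemma iter_cmul : ∀ (n : ℕ) (c : ℝ) {f : ℝ → ℝ} {x : ℝ}, Sm f x →
    iteratedDeriv n (fun a => c * f a) x = c * iteratedDeriv n f x := by
  intro n
  induction n with
  | zero => intro c f x hf; simp
  | succ n ih =>
    intro c f x hf
    have hev : deriv (fun a => c * f a) =ᶠ[𝓝 x] fun a => c * deriv f a := by
      filter_upwards [hf.evd] with a ha
      exact deriv_const_mul c ha
    rw [iteratedDeriv_succ', hev.iteratedDeriv_eq n, ih c (an_deriv hf), iteratedDeriv_succ']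

private lemma iter_mul_succ : ∀ (n : ℕ) {f : ℝ → ℝ}, Sm f 1 →
    iteratedDeriv (n + 1) (fun a => a * f a) 1
      = iteratedDeriv (n + 1) f 1 + ((n : ℝ) + 1) * iteratedDeriv n f 1 := by
  intro n
  induction n with
  | zero =>
    intro f hf
    rw [iteratedDeriv_one, iteratedDeriv_one, iteratedDeriv_zero]
    have h1 : HasDerivAt (fun a : ℝ => a * f a) (1 * f 1 + 1 * deriv f 1) 1 :=
      (hasDerivAt_id 1).mul hf.differentiableAt.hasDerivAt
    rw [h1.deriv]; ring
  | succ n ih =>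
    intro f hf
    have hf' := an_deriv hf
    have hev : deriv (fun a => a * f a) =ᶠ[𝓝 (1 : ℝ)] fun a => f a + a * deriv f a := by
      filter_upwards [hf.evd] with a ha
      have h1 : HasDerivAt (fun b : ℝ => b * f b) (1 * f a + a * deriv f a) a :=
        (hasDerivAt_id a).mul ha.hasDerivAt
      rw [h1.deriv]; ring
    have e1 : iteratedDeriv (n + 1 + 1) (fun a => a * f a) 1
        = iteratedDeriv (n + 1) (deriv (fun a => a * f a)) 1 := by
      rw [iteratedDeriv_succ']
    rw [e1, hev.iteratedDeriv_eq (n + 1),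
      iter_add (n + 1) (g := fun a => a * deriv f a) hf hf'.id_mul, ih hf']
    have e2 : iteratedDeriv (n + 1) (deriv f) 1 = iteratedDeriv (n + 1 + 1) f 1 := by
      rw [iteratedDeriv_succ' (n := n + 1)]
    have e3 : iteratedDeriv n (deriv f) 1 = iteratedDeriv (n + 1) f 1 := by
      rw [iteratedDeriv_succ']
    rw [e2, e3]; push_cast; ring

private lemma iter_mul (k : ℕ) {f : ℝ → ℝ} (hf : Sm f 1) :
    iteratedDeriv k (fun a => a * f a) 1
      = iteratedDeriv k f 1 + (k : ℝ) * iteratedDeriv (k - 1) f 1 := by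
  cases k with
  | zero => simp
  | succ n => simpa using iter_mul_succ n hf


/-- Skein relation for `𝒫_k(L) := z^k ∂_a^k P(L)|_{a=1}`: here `p, q, s` are the
HOMFLY-PT polynomials of `L₊, L₋, L₀` as functions of `a` (for a fixed value of `z`),
satisfying `a·p(a) − a⁻¹·q(a) = z·s(a)`. -/
theorem stmt11 (z : ℝ) (p q s : ℝ → ℝ)
    (hp : ContDiffAt ℝ (⊤ : ℕ∞) p 1) (hq : ContDiffAt ℝ (⊤ : ℕ∞) q 1) (hs : ContDiffAt ℝ (⊤ : ℕ∞) s 1)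
    (hskein : ∀ a : ℝ, a ≠ 0 → a * p a - a⁻¹ * q a = z * s a) (k : ℕ) :
    z ^ k * iteratedDeriv k p 1 - z ^ k * iteratedDeriv k q 1
      + k * z * (z ^ (k - 1) * iteratedDeriv (k - 1) p 1)
      + ∑ i ∈ Finset.range k, (-1 : ℝ) ^ (k - 1 - i) * ((k.factorial : ℝ) / (i.factorial : ℝ))
          * z ^ (k - i) * (z ^ i * iteratedDeriv i q 1)
      = z * (z ^ k * iteratedDeriv k s 1) := by
  have hp' : Sm p 1 := Sm.of_cd hp
  have hs' : Sm s 1 := Sm.of_cd hs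
  -- local identity for q
  have heq : q =ᶠ[𝓝 (1 : ℝ)] fun a => a * (a * p a) + (-z) * (a * s a) := by
    filter_upwards [eventually_ne_nhds (one_ne_zero (α := ℝ))] with a ha
    have h1 := hskein a ha
    have h2 : a * (a * p a - a⁻¹ * q a) = a * (z * s a) := by rw [h1]
    have h3 : a * (a⁻¹ * q a) = q a := by
      rw [← mul_assoc, mul_inv_cancel₀ ha, one_mul]
    nlinarith [h2, h3]
  -- formula for derivatives of q at 1
  have hQ : ∀ n : ℕ, iteratedDeriv n q 1 =
      (iteratedDeriv n p 1 + (n : ℝ) * iteratedDeriv (n - 1) p 1)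
      + (n : ℝ) * (iteratedDeriv (n - 1) p 1 + ((n - 1 : ℕ) : ℝ) * iteratedDeriv (n - 1 - 1) p 1)
      + (-z) * (iteratedDeriv n s 1 + (n : ℝ) * iteratedDeriv (n - 1) s 1) := by
    intro n
    rw [heq.iteratedDeriv_eq n,
      iter_add n (f := fun a => a * (a * p a)) (g := fun a => (-z) * (a * s a))
        hp'.id_mul.id_mul
        (hs'.id_mul.const_mul (-z)),
      iter_cmul n (-z) (f := fun a => a * s a) hs'.id_mul,
      iter_mul n (f := fun a => a * p a) hp'.id_mul,
      iter_mul n (f := p) hp', iter_mul (n - 1) (f := p) hp', iter_mul n (f := s) hs']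
  -- the alternating sum
  have hB : ∀ n : ℕ, (∑ i ∈ Finset.range n, (-1 : ℝ) ^ (n - 1 - i)
        * ((n.factorial : ℝ) / (i.factorial : ℝ)) * iteratedDeriv i q 1)
      = (n : ℝ) * (iteratedDeriv (n - 1) p 1 + ((n - 1 : ℕ) : ℝ) * iteratedDeriv (n - 1 - 1) p 1)
        - z * (n : ℝ) * iteratedDeriv (n - 1) s 1 := by
    intro n
    induction n with
    | zero => simp
    | succ n ih =>
      rw [Finset.sum_range_succ]
      have hcongr : ∀ i ∈ Finset.range n, (-1 : ℝ) ^ (n + 1 - 1 - i)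
            * (((n + 1).factorial : ℝ) / (i.factorial : ℝ)) * iteratedDeriv i q 1
          = (-((n : ℝ) + 1)) * ((-1 : ℝ) ^ (n - 1 - i)
            * ((n.factorial : ℝ) / (i.factorial : ℝ)) * iteratedDeriv i q 1) := by
        intro i hi
        have hi' : i < n := Finset.mem_range.mp hi
        have h4 : n + 1 - 1 - i = (n - 1 - i) + 1 := by omega
        rw [h4, pow_succ, Nat.factorial_succ]
        push_cast
        ring
      rw [Finset.sum_congr rfl hcongr, ← Finset.mul_sum, ih]
      have h5 : n + 1 - 1 - n = 0 := by omega
      have h6 : (((n + 1).factorial : ℝ) / (n.factorial : ℝ)) = (n : ℝ) + 1 := by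
        rw [Nat.factorial_succ]
        push_cast
        rw [mul_div_assoc, div_self (by exact_mod_cast n.factorial_ne_zero), mul_one]
      rw [h5, h6, pow_zero, one_mul, hQ n]
      simp only [Nat.add_sub_cancel]
      push_cast
      ring
  -- conclude
  rcases k with _ | m
  · simp only [pow_zero, one_mul, Nat.cast_zero, zero_mul, Finset.range_zero,
      Finset.sum_empty, add_zero, iteratedDeriv_zero]
    have h1 := hskein 1 one_ne_zero
    simp at h1
    linarith
  · have key : iteratedDeriv (m + 1) p 1 - iteratedDeriv (m + 1) q 1
        + ((m : ℝ) + 1) * iteratedDeriv m p 1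
        + (∑ i ∈ Finset.range (m + 1), (-1 : ℝ) ^ (m + 1 - 1 - i)
            * (((m + 1).factorial : ℝ) / (i.factorial : ℝ)) * iteratedDeriv i q 1)
        = z * iteratedDeriv (m + 1) s 1 := by
      rw [hB (m + 1), hQ (m + 1)]
      simp only [Nat.add_sub_cancel]
      push_cast
      ring
    have hsum : ∀ i ∈ Finset.range (m + 1), (-1 : ℝ) ^ (m + 1 - 1 - i)
          * (((m + 1).factorial : ℝ) / (i.factorial : ℝ)) * z ^ (m + 1 - i)
          * (z ^ i * iteratedDeriv i q 1)
        = z ^ (m + 1) * ((-1 : ℝ) ^ (m + 1 - 1 - i)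
          * (((m + 1).factorial : ℝ) / (i.factorial : ℝ)) * iteratedDeriv i q 1) := by
      intro i hi
      have hi' : i < m + 1 := Finset.mem_range.mp hi
      have hz : z ^ (m + 1 - i) * z ^ i = z ^ (m + 1) := by
        rw [← pow_add, Nat.sub_add_cancel hi'.le]
      calc (-1 : ℝ) ^ (m + 1 - 1 - i) * (((m + 1).factorial : ℝ) / (i.factorial : ℝ))
            * z ^ (m + 1 - i) * (z ^ i * iteratedDeriv i q 1)
          = (z ^ (m + 1 - i) * z ^ i) * ((-1 : ℝ) ^ (m + 1 - 1 - i)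
            * (((m + 1).factorial : ℝ) / (i.factorial : ℝ)) * iteratedDeriv i q 1) := by ring
        _ = _ := by rw [hz]
    rw [Finset.sum_congr rfl hsum, ← Finset.mul_sum]
    simp only [Nat.add_sub_cancel] at key ⊢
    push_cast
    linear_combination (z ^ (m + 1)) * key
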